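/- arXiv:2404.10995 — 4 statements merged into one kernel-verified Lean document; each statement's English description precedes it below -/
import Mathlib

section
/- Let 0 < p < 1/2, a > 0, b > 0, c > 0 and β ≥ 0 with a·β < 1 and a·b ≥ 2c. Define clip_c : ℝ → ℝ by clip_c(u) = min{1, c/|u|}·u for u ≠ 0 and clip_c(0) = 0. Then θ_∞ := −p·c / ((1−p)·(1−aβ)) is the unique real number θ satisfying p·clip_c((1−aβ)·θ + ab) + (1−p)·clip_c((1−aβ)·θ) = 0. -/
open scoped Classical in
/-- The scalar clipping operator `clip_c(u) = min{1, c/|u|} * u` for `u ≠ 0`,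
and `clip_c 0 = 0`. -/
noncomputable def clipR (c u : ℝ) : ℝ :=
  if u = 0 then 0 else min 1 (c / |u|) * u

/-! Write `x = (1 - aβ)θ`. As `ab ≥ 2c`, the first clipped term equals `c` as soon as `x > -c`,
so there the equation reads `pc + (1 - p) clip_c x = 0`; its solution `x = -pc/(1 - p)` lies
strictly inside `(-c, c)`, where `clip_c` is the identity, because `|p| < 1 - p`.
For `x ≤ -c` the left-hand side is at most `|p| c - (1 - p) c < 0`. -/

section Clip

variable {c u : ℝ}

theorem clipR_eq_max_min (hc : 0 ≤ c) (u : ℝ) : clipR c u = max (-c) (min c u) := by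
  unfold clipR
  split_ifs with hu
  · rw [hu, min_eq_right hc, max_eq_right (neg_nonpos.2 hc)]
  have hpos : 0 < |u| := abs_pos.2 hu
  rcases le_or_gt |u| c with hle | hlt
  · obtain ⟨h₁, h₂⟩ := abs_le.1 hle
    rw [min_eq_left ((one_le_div hpos).2 hle), one_mul, min_eq_right h₂, max_eq_right h₁]
  rw [min_eq_right ((div_le_one hpos).2 hlt.le)]
  rcases lt_or_gt_of_ne hu with hneg | hpos'
  · rw [abs_of_neg hneg] at hlt ⊢
    rw [min_eq_right (by linarith), max_eq_left (by linarith)]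
    field_simp
  · rw [abs_of_pos hpos'] at hlt ⊢
    rw [min_eq_left hlt.le, max_eq_right (by linarith)]
    field_simp

theorem abs_clipR_le (hc : 0 ≤ c) (u : ℝ) : |clipR c u| ≤ c := by
  rw [clipR_eq_max_min hc, abs_le]
  exact ⟨le_max_left _ _, max_le (neg_le_self hc) (min_le_left _ _)⟩

theorem clipR_of_le (hc : 0 ≤ c) (h : c ≤ u) : clipR c u = c := by
  rw [clipR_eq_max_min hc, min_eq_left h, max_eq_right (neg_le_self hc)]

theorem clipR_of_le_neg (hc : 0 ≤ c) (h : u ≤ -c) : clipR c u = -c := by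
  rw [clipR_eq_max_min hc, min_eq_right (h.trans (neg_le_self hc)), max_eq_left h]

theorem clipR_eq_iff_of_abs_lt {v : ℝ} (hv : |v| < c) : clipR c u = v ↔ u = v := by
  obtain ⟨h₁, h₂⟩ := abs_lt.1 hv
  rw [clipR_eq_max_min (by linarith), max_def, min_def]
  split_ifs <;> constructor <;> intro h <;> linarith

end Clip

theorem clipR_shift_balance_eq_zero_iff {p c d x : ℝ} (hp : p < 1 / 2) (hc : 0 < c)
    (hd : 2 * c ≤ d) :
    p * clipR c (x + d) + (1 - p) * clipR c x = 0 ↔ x = -(p * c) / (1 - p) := by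
  have hq : 0 < 1 - p := by linarith
  have hp_abs : |p| < 1 - p := abs_lt.2 ⟨by linarith, by linarith⟩
  have hroot : |-(p * c) / (1 - p)| < c := by
    rw [abs_div, abs_neg, abs_mul, abs_of_pos hc, abs_of_pos hq, div_lt_iff₀ hq]
    nlinarith
  rcases le_or_gt x (-c) with hx | hx
  · have hfirst : p * clipR c (x + d) ≤ |p| * c :=
      calc p * clipR c (x + d) ≤ |p * clipR c (x + d)| := le_abs_self _
        _ = |p| * |clipR c (x + d)| := abs_mul _ _
        _ ≤ |p| * c := mul_le_mul_of_nonneg_left (abs_clipR_le hc.le _) (abs_nonneg p)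
    have hsum : p * clipR c (x + d) + (1 - p) * clipR c x < 0 := by
      rw [clipR_of_le_neg hc.le hx]
      nlinarith
    exact iff_of_false hsum.ne (hx.trans_lt (abs_lt.1 hroot).1).ne
  · rw [clipR_of_le hc.le (by linarith), ← clipR_eq_iff_of_abs_lt hroot, eq_div_iff hq.ne']
    constructor <;> intro h <;> linarith

theorem stmt_4_general (p a b c β : ℝ) (hp : p < 1 / 2)
    (hc : 0 < c) (haβ : a * β < 1) (hab : 2 * c ≤ a * b) :
    ∀ θ : ℝ,
      (p * clipR c ((1 - a * β) * θ + a * b) + (1 - p) * clipR c ((1 - a * β) * θ) = 0)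
        ↔ θ = -(p * c) / ((1 - p) * (1 - a * β)) := by
  intro θ
  have hs : 0 < 1 - a * β := by linarith
  rw [clipR_shift_balance_eq_zero_iff hp hc hab, mul_comm (1 - a * β) θ,
    ← eq_div_iff hs.ne', div_div]

/-- Fixed-point construction of Theorem 2: `θ_∞ = -pc/((1-p)(1-aβ))` is the
unique real solution of `p·clip_c((1-aβ)θ + ab) + (1-p)·clip_c((1-aβ)θ) = 0`. -/
theorem stmt_4 (p a b c β : ℝ) (hp0 : 0 < p) (hp : p < 1 / 2) (ha : 0 < a)
    (hb : 0 < b) (hc : 0 < c) (hβ : 0 ≤ β) (haβ : a * β < 1) (hab : 2 * c ≤ a * b) :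
    ∀ θ : ℝ,
      (p * clipR c ((1 - a * β) * θ + a * b) + (1 - p) * clipR c ((1 - a * β) * θ) = 0)
        ↔ θ = -(p * c) / ((1 - p) * (1 - a * β)) :=
  stmt_4_general p a b c β hp hc haβ hab
end

section
/- Let 0 < p < 1/2, a > 0, b > 0, c > 0 and β ≥ 0 with a·β < 1 and a·b ≥ 2c. Set θ_PS := −p·a·b/(1−aβ) and θ_∞ := −p·c/((1−p)·(1−aβ)). Then: (i) θ_PS is the unique real number θ satisfying θ + a·(b·p − β·θ) = 0; and (ii) (θ_∞ − θ_PS)² = (p/(1−aβ))² · (a·b − c/(1−p))², and this quantity is strictly greater than (p·(a·b − 2c)/(1−aβ))². -/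
/-! The stationarity equation is affine in θ with slope `1 - aβ ≠ 0`, and the gap identity is
field arithmetic. The strict lower bound comes from `c / (1 - p) < 2c` (as `p < 1/2`, `c > 0`), so
that `0 ≤ ab - 2c < ab - c / (1 - p)`, and squaring preserves the strict order on nonnegatives. -/

theorem add_mul_sub_mul_eq_zero_iff {K : Type*} [Field K] {a b p β : K} (h : 1 - a * β ≠ 0)
    (θ : K) : θ + a * (b * p - β * θ) = 0 ↔ θ = -(p * a * b) / (1 - a * β) := by
  rw [eq_div_iff h]
  constructor <;> intro h' <;> linear_combination h'

theorem div_one_sub_lt_two_mul {p c : ℝ} (hc : 0 < c) (hp : p < 1 / 2) : c / (1 - p) < 2 * c := by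
  rw [div_lt_iff₀ (by linarith)]
  nlinarith

theorem stmt_5_general (p a b c β : ℝ) (hp0 : 0 < p) (hp : p < 1 / 2)
    (hc : 0 < c) (haβ : a * β < 1) (hab : 2 * c ≤ a * b) :
    (∀ θ : ℝ, θ + a * (b * p - β * θ) = 0 ↔ θ = -(p * a * b) / (1 - a * β)) ∧
    (-(p * c) / ((1 - p) * (1 - a * β)) - -(p * a * b) / (1 - a * β)) ^ 2
        = (p / (1 - a * β)) ^ 2 * (a * b - c / (1 - p)) ^ 2 ∧
    (p * (a * b - 2 * c) / (1 - a * β)) ^ 2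
        < (p / (1 - a * β)) ^ 2 * (a * b - c / (1 - p)) ^ 2 := by
  have haβ₁ : 1 - a * β ≠ 0 := by linarith
  have hp₁ : 1 - p ≠ 0 := by linarith
  refine ⟨add_mul_sub_mul_eq_zero_iff haβ₁, by field_simp; ring, ?_⟩
  have hgap : (a * b - 2 * c) ^ 2 < (a * b - c / (1 - p)) ^ 2 :=
    pow_lt_pow_left₀ (by linarith [div_one_sub_lt_two_mul hc hp]) (by linarith) two_ne_zero
  calc (p * (a * b - 2 * c) / (1 - a * β)) ^ 2
      = (p / (1 - a * β)) ^ 2 * (a * b - 2 * c) ^ 2 := by ring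
    _ < (p / (1 - a * β)) ^ 2 * (a * b - c / (1 - p)) ^ 2 :=
      mul_lt_mul_of_pos_left hgap (by positivity)

/-- Quantitative content of Theorem 2 (lower bound on the clipping bias):
`θ_PS = -pab/(1-aβ)` is the unique solution of `θ + a(bp - βθ) = 0`, and the
squared gap `(θ_∞ - θ_PS)²` equals `(p/(1-aβ))²(ab - c/(1-p))²`, which is
strictly greater than `(p(ab - 2c)/(1-aβ))²`. -/
theorem stmt_5 (p a b c β : ℝ) (hp0 : 0 < p) (hp : p < 1 / 2) (ha : 0 < a)
    (hb : 0 < b) (hc : 0 < c) (hβ : 0 ≤ β) (haβ : a * β < 1) (hab : 2 * c ≤ a * b) :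
    (∀ θ : ℝ, θ + a * (b * p - β * θ) = 0 ↔ θ = -(p * a * b) / (1 - a * β)) ∧
    (-(p * c) / ((1 - p) * (1 - a * β)) - -(p * a * b) / (1 - a * β)) ^ 2
        = (p / (1 - a * β)) ^ 2 * (a * b - c / (1 - p)) ^ 2 ∧
    (p * (a * b - 2 * c) / (1 - a * β)) ^ 2
        < (p / (1 - a * β)) ^ 2 * (a * b - c / (1 - p)) ^ 2 :=
  stmt_5_general p a b c β hp0 hp hc haβ hab
end

section
/- Let μ̃ > 0, c₁ ≥ 0, C₁ ≥ 0, and let (γ_t)_{t≥1} be a non-increasing sequence of positive reals with γ_1 < 2/μ̃, γ_t ≤ 1/μ̃ for all t ≥ 1, and γ_t/γ_{t+1} ≤ 1 + (μ̃/2)·γ_{t+1} for all t ≥ 1. Let (u_t)_{t≥0} be non-negative reals satisfying u_{t+1} ≤ (1 − μ̃·γ_{t+1})·u_t + c₁·γ_{t+1}² + (4C₁/μ̃)·γ_{t+1} for all t ≥ 0. Then for every t ≥ 0, u_{t+1} ≤ (∏_{i=1}^{t+1} (1 − μ̃·γ_i))·u_0 + (2c₁/μ̃)·γ_{t+1} +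 8C₁/μ̃². -/
/-!
The right-hand side `w t`, with the step size `γ 0` replaced by `0`, is a supersolution of the
recursion: `(1 - μ̃γ_{t+1}) w t + c₁γ_{t+1}² + (4C₁/μ̃)γ_{t+1} ≤ w (t + 1)`. For the `u 0`-term this
is an identity of products; for the `c₁`-term it is the step-size condition
`γ_t ≤ γ_{t+1}(1 + μ̃γ_{t+1}/2)`; for the constant `8C₁/μ̃²` it holds because the contraction
`μ̃γ_{t+1} · 8C₁/μ̃²` is twice the injected bias `(4C₁/μ̃)γ_{t+1}`. Since `u 0 ≤ w 0`, the
comparison principle for nonnegative-coefficient recursions gives `u t ≤ w t` for all `t`.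
-/

theorem le_of_recursion_le_of_le_recursion {u w a b : ℕ → ℝ} (ha : ∀ t, 0 ≤ a t)
    (hu : ∀ t, u (t + 1) ≤ a t * u t + b t) (hw : ∀ t, a t * w t + b t ≤ w (t + 1))
    (h0 : u 0 ≤ w 0) : ∀ t, u t ≤ w t := by
  intro t
  induction t with
  | zero => exact h0
  | succ t ih =>
    calc u (t + 1) ≤ a t * u t + b t := hu t
      _ ≤ a t * w t + b t := by gcongr; exact ha t
      _ ≤ w (t + 1) := hw t

theorem one_sub_mul_mul_add_sq_le {μ γ γ' : ℝ} (hγ' : 0 ≤ γ') (hμγ' : μ * γ' ≤ 1)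
    (hratio : γ ≤ γ' * (1 + μ / 2 * γ')) :
    (1 - μ * γ') * γ + μ / 2 * γ' ^ 2 ≤ γ' := by
  have hcontr : 0 ≤ 1 - μ * γ' := by linarith
  calc (1 - μ * γ') * γ + μ / 2 * γ' ^ 2
      ≤ (1 - μ * γ') * (γ' * (1 + μ / 2 * γ')) + μ / 2 * γ' ^ 2 := by gcongr
    _ = γ' - μ ^ 2 / 2 * γ' ^ 3 := by ring
    _ ≤ γ' := by nlinarith [pow_nonneg hγ' 3, sq_nonneg μ]

theorem contraction_add_increment_le_bound {μ c C γ γ' : ℝ} (hμ : 0 < μ) (hc : 0 ≤ c)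
    (hC : 0 ≤ C) (hγ' : 0 ≤ γ') (hμγ' : μ * γ' ≤ 1) (hratio : γ ≤ γ' * (1 + μ / 2 * γ')) (P x : ℝ) :
    (1 - μ * γ') * (P * x + 2 * c / μ * γ + 8 * C / μ ^ 2) + c * γ' ^ 2 + 4 * C / μ * γ'
      ≤ P * (1 - μ * γ') * x + 2 * c / μ * γ' + 8 * C / μ ^ 2 := by
  have hdrift : 2 * c / μ * ((1 - μ * γ') * γ + μ / 2 * γ' ^ 2) ≤ 2 * c / μ * γ' :=
    mul_le_mul_of_nonneg_left (one_sub_mul_mul_add_sq_le hγ' hμγ' hratio) (by positivity)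
  have hbias : 0 ≤ 4 * C / μ * γ' := by positivity
  have hμ' : μ ≠ 0 := hμ.ne'
  have hsplit : (1 - μ * γ') * (P * x + 2 * c / μ * γ + 8 * C / μ ^ 2) + c * γ' ^ 2
        + 4 * C / μ * γ'
      = P * (1 - μ * γ') * x + 2 * c / μ * ((1 - μ * γ') * γ + μ / 2 * γ' ^ 2)
        + 8 * C / μ ^ 2 - 4 * C / μ * γ' := by
    field_simp
    ring
  linarith

theorem stmt_6_general (μs c₁ C₁ : ℝ) (hμ : 0 < μs) (hc₁ : 0 ≤ c₁) (hC₁ : 0 ≤ C₁)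
    (γ : ℕ → ℝ) (hpos : ∀ t, 1 ≤ t → 0 < γ t)
    (hbd : ∀ t, 1 ≤ t → γ t ≤ 1 / μs)
    (hratio : ∀ t, 1 ≤ t → γ t / γ (t + 1) ≤ 1 + (μs / 2) * γ (t + 1))
    (u : ℕ → ℝ)
    (hrec : ∀ t : ℕ, u (t + 1) ≤
      (1 - μs * γ (t + 1)) * u t + c₁ * γ (t + 1) ^ 2 + (4 * C₁ / μs) * γ (t + 1)) :
    ∀ t : ℕ, u (t + 1) ≤
      (∏ i ∈ Finset.Icc 1 (t + 1), (1 - μs * γ i)) * u 0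
        + (2 * c₁ / μs) * γ (t + 1) + 8 * C₁ / μs ^ 2 := by
  set γ₀ := Function.update γ 0 0
  set w : ℕ → ℝ := fun t =>
    (∏ i ∈ Finset.Icc 1 t, (1 - μs * γ i)) * u 0 + 2 * c₁ / μs * γ₀ t + 8 * C₁ / μs ^ 2
  have hγpos : ∀ t, 0 < γ (t + 1) := fun t => hpos (t + 1) (Nat.le_add_left 1 t)
  have hμγ : ∀ t, μs * γ (t + 1) ≤ 1 :=
    fun t => (le_div_iff₀' hμ).mp (hbd (t + 1) (Nat.le_add_left 1 t))
  have hstep : ∀ t, γ₀ t ≤ γ (t + 1) * (1 + μs / 2 * γ (t + 1)) := by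
    rintro (_ | t)
    · have := hγpos 0
      simp only [γ₀, Function.update_self]
      positivity
    · have := hratio (t + 1) (by omega)
      rw [div_le_iff₀ (hγpos (t + 1)), mul_comm] at this
      simpa [γ₀] using this
  have hsuper : ∀ t, (1 - μs * γ (t + 1)) * w t
      + (c₁ * γ (t + 1) ^ 2 + 4 * C₁ / μs * γ (t + 1)) ≤ w (t + 1) := by
    intro t
    have hγ₀ : γ₀ (t + 1) = γ (t + 1) := Function.update_of_ne t.succ_ne_zero _ _
    simp only [w]
    rw [Finset.prod_Icc_succ_top (Nat.le_add_left 1 t), hγ₀, ← add_assoc]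
    exact contraction_add_increment_le_bound hμ hc₁ hC₁ (hγpos t).le (hμγ t) (hstep t) _ (u 0)
  have hw₀ : u 0 ≤ w 0 := by simpa [w, γ₀] using (by positivity : 0 ≤ 8 * C₁ / μs ^ 2)
  have hcomp := le_of_recursion_le_of_le_recursion (fun t => by linarith [hμγ t])
    (fun t => by linarith [hrec t]) hsuper hw₀
  intro t
  simpa [w, γ₀] using hcomp (t + 1)

/-- Deterministic recursion behind Theorem 1 (PCSGD, strongly convex case):
a recursion `u_{t+1} ≤ (1 - μ̃γ_{t+1}) u_t + c₁ γ_{t+1}² + (4C₁/μ̃) γ_{t+1}`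
with admissible step sizes yields
`u_{t+1} ≤ (∏_{i=1}^{t+1} (1 - μ̃ γ_i)) u_0 + (2c₁/μ̃) γ_{t+1} + 8C₁/μ̃²`. -/
theorem stmt_6 (μs c₁ C₁ : ℝ) (hμ : 0 < μs) (hc₁ : 0 ≤ c₁) (hC₁ : 0 ≤ C₁)
    (γ : ℕ → ℝ) (hpos : ∀ t, 1 ≤ t → 0 < γ t)
    (hmono : ∀ t, 1 ≤ t → γ (t + 1) ≤ γ t)
    (hinit : γ 1 < 2 / μs)
    (hbd : ∀ t, 1 ≤ t → γ t ≤ 1 / μs)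
    (hratio : ∀ t, 1 ≤ t → γ t / γ (t + 1) ≤ 1 + (μs / 2) * γ (t + 1))
    (u : ℕ → ℝ) (hu : ∀ t, 0 ≤ u t)
    (hrec : ∀ t : ℕ, u (t + 1) ≤
      (1 - μs * γ (t + 1)) * u t + c₁ * γ (t + 1) ^ 2 + (4 * C₁ / μs) * γ (t + 1)) :
    ∀ t : ℕ, u (t + 1) ≤
      (∏ i ∈ Finset.Icc 1 (t + 1), (1 - μs * γ i)) * u 0
        + (2 * c₁ / μs) * γ (t + 1) + 8 * C₁ / μs ^ 2 :=
  stmt_6_general μs c₁ C₁ hμ hc₁ hC₁ γ hpos hbd hratio u hrec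
end

section
/- Let μ be a probability measure on a measurable space Z, let g : Z → ℝ^d be strongly measurable with ‖g(z)‖ ≤ G for μ-almost every z, where G ≥ 0, let c > 0, and set u := ∫ g(z) dμ(z) and w := ∫ clip_c(g(z)) dμ(z). Then ⟨u, w⟩ ≥ (1/2)·‖u‖² − 2·(max(G − c, 0))². -/
/-!
Pointwise, clipping moves `g` by exactly `max (‖g‖ - c) 0 ≤ max (G - c) 0`, so averaging gives
`‖w - u‖ ≤ max (G - c) 0`. The bound then follows from the polarization identity
`2 ⟪u, w⟫ = ‖u‖² + ‖w‖² - ‖w - u‖² ≥ ‖u‖² - ‖w - u‖²`.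
-/

open MeasureTheory
open scoped RealInnerProductSpace

open scoped Classical in
/-- The clipping operator on a normed space: `clip_c(g) = min{1, c/‖g‖} • g` for
`g ≠ 0`, and `clip_c 0 = 0`. -/
noncomputable def clip {E : Type*} [NormedAddCommGroup E] [NormedSpace ℝ E]
    (c : ℝ) (g : E) : E :=
  if g = 0 then 0 else min 1 (c / ‖g‖) • g

section Clip

variable {E : Type*} [NormedAddCommGroup E] [NormedSpace ℝ E]

lemma clip_eq_smul (c : ℝ) (x : E) : clip c x = min 1 (c / ‖x‖) • x := by
  by_cases h : x = 0 <;> simp [clip, h]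

lemma norm_clip_sub_self {c : ℝ} (hc : 0 ≤ c) (x : E) :
    ‖clip c x - x‖ = max (‖x‖ - c) 0 := by
  rcases eq_or_ne x 0 with rfl | hx
  · simp [clip, hc]
  have hx' : 0 < ‖x‖ := norm_pos_iff.mpr hx
  have hcoef : 0 ≤ 1 - min 1 (c / ‖x‖) := sub_nonneg.mpr (min_le_left _ _)
  calc ‖clip c x - x‖ = (1 - min 1 (c / ‖x‖)) * ‖x‖ := by
        rw [clip_eq_smul, ← norm_neg, neg_sub, ← Real.norm_of_nonneg hcoef, ← norm_smul,
          sub_smul, one_smul]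
    _ = max (‖x‖ - c) 0 := by
        rcases le_total ‖x‖ c with h | h
        · rw [min_eq_left ((one_le_div hx').2 h), max_eq_right (by linarith)]
          ring
        · rw [min_eq_right ((div_le_one hx').2 h), max_eq_left (by linarith)]
          field_simp

lemma norm_clip_le {c : ℝ} (hc : 0 ≤ c) (x : E) : ‖clip c x‖ ≤ ‖x‖ := by
  rw [clip_eq_smul, norm_smul]
  refine mul_le_of_le_one_left (norm_nonneg x) ?_
  rw [Real.norm_of_nonneg (le_min zero_le_one (by positivity))]
  exact min_le_left _ _

variable {Z : Type*} [MeasurableSpace Z] {μ : Measure Z}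

lemma MeasureTheory.AEStronglyMeasurable.clip {f : Z → E} (hf : AEStronglyMeasurable f μ)
    (c : ℝ) : AEStronglyMeasurable (fun z => clip c (f z)) μ := by
  simp only [clip_eq_smul]
  exact (measurable_const.min (measurable_const.div measurable_id)).comp_aemeasurable
    hf.norm.aemeasurable |>.aestronglyMeasurable.smul hf

lemma norm_integral_clip_sub_integral_le [CompleteSpace E] [IsProbabilityMeasure μ]
    {f : Z → E} (hf : AEStronglyMeasurable f μ) {G : ℝ} (hbd : ∀ᵐ z ∂μ, ‖f z‖ ≤ G)
    {c : ℝ} (hc : 0 ≤ c) :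
    ‖∫ z, clip c (f z) ∂μ - ∫ z, f z ∂μ‖ ≤ max (G - c) 0 := by
  have hfi : Integrable f μ := .of_bound hf G hbd
  have hci : Integrable (fun z => clip c (f z)) μ :=
    .of_bound (hf.clip c) G (hbd.mono fun z hz => (norm_clip_le hc (f z)).trans hz)
  rw [← integral_sub hci hfi]
  have hpt : ∀ᵐ z ∂μ, ‖clip c (f z) - f z‖ ≤ max (G - c) 0 := hbd.mono fun z hz => by
    rw [norm_clip_sub_self hc]
    exact max_le_max_right 0 (by linarith)
  exact (norm_integral_le_of_norm_le_const hpt).trans_eq (by simp)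

end Clip

lemma half_sub_half_norm_sub_sq_le_inner {F : Type*} [NormedAddCommGroup F]
    [InnerProductSpace ℝ F] (u w : F) :
    (‖u‖ ^ 2 - ‖w - u‖ ^ 2) / 2 ≤ ⟪u, w⟫ := by
  rw [norm_sub_sq_real, real_inner_comm]
  linarith [sq_nonneg ‖w‖]

theorem stmt_13_general {Z : Type*} [MeasurableSpace Z] (μ : Measure Z) [IsProbabilityMeasure μ]
    {d : ℕ} (g : Z → EuclideanSpace ℝ (Fin d)) (hg : StronglyMeasurable g)
    (G : ℝ) (hbd : ∀ᵐ z ∂μ, ‖g z‖ ≤ G)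
    (c : ℝ) (hc : 0 < c) :
    (1 / 2) * ‖∫ z, g z ∂μ‖ ^ 2 - 2 * max (G - c) 0 ^ 2
      ≤ ⟪∫ z, g z ∂μ, ∫ z, clip c (g z) ∂μ⟫ := by
  have hclose := norm_integral_clip_sub_integral_le hg.aestronglyMeasurable hbd hc.le
  have hsq := pow_le_pow_left₀ (norm_nonneg _) hclose 2
  have := half_sub_half_norm_sub_sq_le_inner (∫ z, g z ∂μ) (∫ z, clip c (g z) ∂μ)
  linarith [sq_nonneg (max (G - c) 0)]

/-- Inner-product lower bound from the proof of Theorem 3: with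
`u = ∫ g dμ` and `w = ∫ clip_c(g) dμ`, if `‖g z‖ ≤ G` a.e. then
`⟪u, w⟫ ≥ (1/2)‖u‖² - 2 (max (G - c) 0)²`. -/
theorem stmt_13 {Z : Type*} [MeasurableSpace Z] (μ : Measure Z) [IsProbabilityMeasure μ]
    {d : ℕ} (g : Z → EuclideanSpace ℝ (Fin d)) (hg : StronglyMeasurable g)
    (G : ℝ) (hG : 0 ≤ G) (hbd : ∀ᵐ z ∂μ, ‖g z‖ ≤ G)
    (c : ℝ) (hc : 0 < c) :
    (1 / 2) * ‖∫ z, g z ∂μ‖ ^ 2 - 2 * max (G - c) 0 ^ 2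
      ≤ ⟪∫ z, g z ∂μ, ∫ z, clip c (g z) ∂μ⟫ :=
  stmt_13_general μ g hg G hbd c hc
end
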